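/- arXiv:2403.03455 — 2 statements merged into one kernel-verified Lean document; each statement's English description precedes it below -/
import Mathlib

section
/- Let 0 ≤ γ₁ < γ₂ and define, for fixed t ≤ 0, the values V_{γᵢ}(x,t) = sup_d inf_u max_{s∈[t,0]} e^{γᵢ(s−t)} ℓ(ξ(s)). Then V_{γ₁}(x,t) = 0 if and only if V_{γ₂}(x,t) = 0; i.e., the zero level sets Z_{γ}(t) = {x : V_γ(x,t) = 0} coincide for all γ ≥ 0. -/
open Real

section helpers

variable {t : ℝ}

private lemma icc_nonempty (ht : t < 0) : Nonempty (Set.Icc t (0:ℝ)) :=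
  ⟨⟨t, le_refl t, ht.le⟩⟩

private lemma bddAbove_wF (ht : t < 0) {F : ℝ → ℝ}
    (hF : ContinuousOn F (Set.Icc t 0)) (γ : ℝ) :
    BddAbove (Set.range fun s : Set.Icc t (0:ℝ) =>
      Real.exp (γ * ((s : ℝ) - t)) * F s) := by
  have hcont : ContinuousOn (fun s : ℝ => Real.exp (γ * (s - t)) * F s) (Set.Icc t 0) :=
    (Real.continuous_exp.comp (by continuity)).continuousOn.mul hF
  have h := (isCompact_Icc.image_of_continuousOn hcont).bddAbove
  rwa [Set.image_eq_range] at h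

private lemma exists_max (ht : t < 0) {F : ℝ → ℝ}
    (hF : ContinuousOn F (Set.Icc t 0)) :
    ∃ s₀ : Set.Icc t (0:ℝ), ∀ s : Set.Icc t (0:ℝ), F s ≤ F s₀ := by
  obtain ⟨x, hx, hmax⟩ := isCompact_Icc.exists_isMaxOn ⟨t, le_refl t, ht.le⟩ hF
  exact ⟨⟨x, hx⟩, fun s => hmax s.2⟩

private lemma weight_ge_one (ht : t < 0) {γ : ℝ} (hγ : 0 ≤ γ) (s : Set.Icc t (0:ℝ)) :
    1 ≤ Real.exp (γ * ((s : ℝ) - t)) :=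
  Real.one_le_exp (mul_nonneg hγ (by linarith [s.2.1]))

private lemma weight_le (ht : t < 0) {γ : ℝ} (hγ : 0 ≤ γ) (s : Set.Icc t (0:ℝ)) :
    Real.exp (γ * ((s : ℝ) - t)) ≤ Real.exp (-(γ * t)) :=
  Real.exp_le_exp.2 (by nlinarith [s.2.2, s.2.1])

/-- If the sup of the γ-weighted function is at least `c > 0`, then the sup of the
γ'-weighted function is at least `c * exp (γ t)`. -/
private lemma key_pos (ht : t < 0) {F : ℝ → ℝ}
    (hF : ContinuousOn F (Set.Icc t 0)) {γ γ' c : ℝ} (hγ : 0 ≤ γ) (hγ' : 0 ≤ γ')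
    (hc : 0 < c)
    (h : c ≤ ⨆ s : Set.Icc t (0:ℝ), Real.exp (γ * ((s : ℝ) - t)) * F s) :
    c * Real.exp (γ * t) ≤
      ⨆ s : Set.Icc t (0:ℝ), Real.exp (γ' * ((s : ℝ) - t)) * F s := by
  haveI : Nonempty (Set.Icc t (0:ℝ)) := icc_nonempty ht
  obtain ⟨s₀, hmax⟩ := exists_max ht hF
  set m : ℝ := F s₀ with hm
  -- upper bound on the γ-weighted sup
  have hub : (⨆ s : Set.Icc t (0:ℝ), Real.exp (γ * ((s : ℝ) - t)) * F s) ≤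
      Real.exp (-(γ * t)) * max m 0 := by
    refine ciSup_le fun s => ?_
    rcases le_or_gt (F s) 0 with hFs | hFs
    · have h1 : Real.exp (γ * ((s : ℝ) - t)) * F s ≤ 0 :=
        mul_nonpos_of_nonneg_of_nonpos (Real.exp_pos _).le hFs
      have h2 : (0:ℝ) ≤ Real.exp (-(γ * t)) * max m 0 :=
        mul_nonneg (Real.exp_pos _).le (le_max_right _ _)
      linarith
    · calc Real.exp (γ * ((s : ℝ) - t)) * F s
          ≤ Real.exp (-(γ * t)) * F s :=
            mul_le_mul_of_nonneg_right (weight_le ht hγ s) hFs.le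
        _ ≤ Real.exp (-(γ * t)) * max m 0 :=
            mul_le_mul_of_nonneg_left (le_trans (hmax s) (le_max_left _ _))
              (Real.exp_pos _).le
  have hcm : c ≤ Real.exp (-(γ * t)) * max m 0 := le_trans h hub
  have hexp : Real.exp (-(γ * t)) * Real.exp (γ * t) = 1 := by
    rw [← Real.exp_add]; simp
  have hmax0 : c * Real.exp (γ * t) ≤ max m 0 := by
    have := mul_le_mul_of_nonneg_right hcm (Real.exp_pos (γ * t)).le
    calc c * Real.exp (γ * t) ≤ Real.exp (-(γ * t)) * max m 0 * Real.exp (γ * t) := this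
      _ = max m 0 := by rw [mul_comm (Real.exp (-(γ * t))) (max m 0), mul_assoc, hexp, mul_one]
  have hmpos : c * Real.exp (γ * t) ≤ m := by
    rcases le_total m 0 with hm0 | hm0
    · have : max m 0 = 0 := max_eq_right hm0
      rw [this] at hmax0
      nlinarith [Real.exp_pos (γ * t)]
    · rwa [max_eq_left hm0] at hmax0
  have hm0 : 0 ≤ m := le_trans (by positivity) hmpos
  -- lower bound on the γ'-weighted sup via s₀
  have hterm : m ≤ Real.exp (γ' * ((s₀ : ℝ) - t)) * F s₀ := by
    rw [← hm]
    nlinarith [weight_ge_one ht hγ' s₀]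
  calc c * Real.exp (γ * t) ≤ m := hmpos
    _ ≤ Real.exp (γ' * ((s₀ : ℝ) - t)) * F s₀ := hterm
    _ ≤ _ := le_ciSup (bddAbove_wF ht hF γ') s₀

/-- If the sup of the γ-weighted function is at most `-c < 0`, then the sup of the
γ'-weighted function is at most `-c * exp (γ t)`. -/
private lemma key_neg (ht : t < 0) {F : ℝ → ℝ}
    (hF : ContinuousOn F (Set.Icc t 0)) {γ γ' c : ℝ} (hγ : 0 ≤ γ) (hγ' : 0 ≤ γ')
    (hc : 0 < c)
    (h : (⨆ s : Set.Icc t (0:ℝ), Real.exp (γ * ((s : ℝ) - t)) * F s) ≤ -c) :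
    (⨆ s : Set.Icc t (0:ℝ), Real.exp (γ' * ((s : ℝ) - t)) * F s) ≤
      -c * Real.exp (γ * t) := by
  haveI : Nonempty (Set.Icc t (0:ℝ)) := icc_nonempty ht
  obtain ⟨s₀, hmax⟩ := exists_max ht hF
  set m : ℝ := F s₀ with hm
  have hlow : Real.exp (γ * ((s₀ : ℝ) - t)) * m ≤ -c := by
    rw [hm]
    exact le_trans (le_ciSup (bddAbove_wF ht hF γ) s₀) h
  have hmneg : m < 0 := by
    by_contra hm0
    push_neg at hm0
    nlinarith [Real.exp_pos (γ * ((s₀ : ℝ) - t))]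
  -- C * m ≤ exp(γ(s₀-t)) * m ≤ -c, so m ≤ -c * exp (γ t)
  have hCm : Real.exp (-(γ * t)) * m ≤ -c := by
    have := mul_le_mul_of_nonpos_right (weight_le ht hγ s₀) hmneg.le
    linarith
  have hmle : m ≤ -c * Real.exp (γ * t) := by
    have hexp : Real.exp (-(γ * t)) * Real.exp (γ * t) = 1 := by
      rw [← Real.exp_add]; simp
    nlinarith [Real.exp_pos (γ * t), Real.exp_pos (-(γ * t))]
  refine ciSup_le fun s => ?_
  have hFs : F s ≤ m := hmax s
  have : Real.exp (γ' * ((s : ℝ) - t)) * F s ≤ F s := by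
    nlinarith [weight_ge_one ht hγ' s, hFs, hmneg]
  linarith

end helpers

/-- The zero level sets of the time-varying robust CLVF coincide for all
exponential rates: for `0 ≤ γ₁ < γ₂`, `V_{γ₁}(x,t) = 0 ↔ V_{γ₂}(x,t) = 0`,
where `V_γ(x,t) = sup_d inf_u max_{s∈[t,0]} e^{γ(s−t)} ℓ(ξ(s))`, the inner
extrema being over the compact interval `[t,0]`, and optimal disturbance
strategies and control signals exist. -/
theorem zero_level_sets_coincide {E U D : Type*} [TopologicalSpace E]
    [Nonempty U] [Nonempty D]
    (t : ℝ) (ht : t < 0) (ℓ : E → ℝ) (hℓ : Continuous ℓ)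
    (ξ : D → U → ℝ → E)
    (hξ : ∀ (d : D) (u : U), ContinuousOn (ξ d u) (Set.Icc t 0))
    (V : ℝ → ℝ)
    (hV : ∀ γ : ℝ, V γ =
      ⨆ d, ⨅ u, ⨆ s : Set.Icc t (0:ℝ),
        Real.exp (γ * ((s : ℝ) - t)) * ℓ (ξ d u s))
    -- the supremum over disturbance strategies is attained
    (hdopt : ∀ γ : ℝ, 0 ≤ γ → ∃ d : D, V γ =
      ⨅ u, ⨆ s : Set.Icc t (0:ℝ), Real.exp (γ * ((s : ℝ) - t)) * ℓ (ξ d u s))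
    -- the infimum over control signals is attained
    (huopt : ∀ (γ : ℝ), 0 ≤ γ → ∀ d : D, ∃ u : U,
      (⨅ u' : U, ⨆ s : Set.Icc t (0:ℝ),
        Real.exp (γ * ((s : ℝ) - t)) * ℓ (ξ d u' s)) =
      ⨆ s : Set.Icc t (0:ℝ), Real.exp (γ * ((s : ℝ) - t)) * ℓ (ξ d u s))
    (γ₁ γ₂ : ℝ) (h1 : 0 ≤ γ₁) (h12 : γ₁ < γ₂) :
    V γ₁ = 0 ↔ V γ₂ = 0 := by
  have hγ₂ : 0 ≤ γ₂ := h1.trans h12.le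
  have hF : ∀ (d : D) (u : U), ContinuousOn (fun s => ℓ (ξ d u s)) (Set.Icc t 0) :=
    fun d u => hℓ.comp_continuousOn (hξ d u)
  haveI : Nonempty (Set.Icc t (0:ℝ)) := icc_nonempty ht
  -- abbreviation for the inner weighted sup
  set W : ℝ → D → U → ℝ := fun γ d u =>
    ⨆ s : Set.Icc t (0:ℝ), Real.exp (γ * ((s : ℝ) - t)) * ℓ (ξ d u s) with hW
  have key : ∀ γa γb : ℝ, 0 ≤ γa → 0 ≤ γb → V γa = 0 → V γb = 0 := by
    intro γa γb hγa hγb hVa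
    have hle : V γb ≤ 0 := by
      by_contra hpos
      push_neg at hpos
      obtain ⟨d', hd'⟩ := hdopt γb hγb
      have hbdd : BddBelow (Set.range fun u : U => W γb d' u) := by
        by_contra hnb
        rw [show (⨅ u, ⨆ s : Set.Icc t (0:ℝ),
            Real.exp (γb * ((s : ℝ) - t)) * ℓ (ξ d' u s)) = ⨅ u, W γb d' u from rfl,
          Real.iInf_of_not_bddBelow hnb] at hd'
        exact hpos.ne' hd'
      have hWlow : ∀ u : U, V γb ≤ W γb d' u := by
        intro u
        rw [hd']
        exact ciInf_le hbdd u
      have hWa : ∀ u : U, V γb * Real.exp (γb * t) ≤ W γa d' u :=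
        fun u => key_pos ht (hF d' u) hγb hγa hpos (hWlow u)
      have hga : V γb * Real.exp (γb * t) ≤ ⨅ u, W γa d' u := le_ciInf hWa
      have hgapos : 0 < ⨅ u, W γa d' u :=
        lt_of_lt_of_le (by positivity) hga
      by_cases hba : BddAbove (Set.range fun d : D => ⨅ u, W γa d u)
      · have hle' : (⨅ u, W γa d' u) ≤ V γa := by
          rw [hV γa]
          exact le_ciSup hba d'
        rw [hVa] at hle'
        linarith
      · rw [not_bddAbove_iff] at hba
        have hnb' : ¬ BddAbove (Set.range fun d : D => ⨅ u, W γb d u) := by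
          rw [not_bddAbove_iff]
          intro B
          obtain ⟨y, ⟨d, rfl⟩, hy⟩ := hba ((|B| + 1) * Real.exp (-(γa * t)))
          refine ⟨_, ⟨d, rfl⟩, ?_⟩
          set K : ℝ := (|B| + 1) * Real.exp (-(γa * t)) with hK
          have hKpos : 0 < K := by positivity
          have hy' : K < ⨅ u, W γa d u := hy
          have hbddd : BddBelow (Set.range fun u : U => W γa d u) := by
            by_contra hnb2
            rw [Real.iInf_of_not_bddBelow hnb2] at hy'
            linarith
          have hKle : ∀ u : U, K ≤ W γa d u :=
            fun u => hy'.le.trans (ciInf_le hbddd u)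
          have h2 : ∀ u : U, K * Real.exp (γa * t) ≤ W γb d u :=
            fun u => key_pos ht (hF d u) hγa hγb hKpos (hKle u)
          have h3 : K * Real.exp (γa * t) ≤ ⨅ u, W γb d u := le_ciInf h2
          have hKval : K * Real.exp (γa * t) = |B| + 1 := by
            rw [hK, mul_assoc, ← Real.exp_add]
            simp
          rw [hKval] at h3
          have hB : B ≤ |B| := le_abs_self B
          show B < ⨅ u, W γb d u
          linarith
        rw [hV γb, Real.iSup_of_not_bddAbove hnb'] at hpos
        exact lt_irrefl 0 hpos
    have hge : 0 ≤ V γb := by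
      by_contra hneg
      push_neg at hneg
      have hba : BddAbove (Set.range fun d : D => ⨅ u, W γb d u) := by
        by_contra hnb
        rw [hV γb, Real.iSup_of_not_bddAbove hnb] at hneg
        exact lt_irrefl 0 hneg
      obtain ⟨d0, hd0⟩ := hdopt γa hγa
      have hgb0 : (⨅ u, W γb d0 u) ≤ V γb := by
        rw [hV γb]
        exact le_ciSup hba d0
      obtain ⟨u0, hu0⟩ := huopt γb hγb d0
      have hgb0' : (⨅ u' : U, ⨆ s : Set.Icc t (0:ℝ),
          Real.exp (γb * ((s : ℝ) - t)) * ℓ (ξ d0 u' s)) ≤ V γb := hgb0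
      have hW0 : W γb d0 u0 ≤ V γb := by
        show (⨆ s : Set.Icc t (0:ℝ),
          Real.exp (γb * ((s : ℝ) - t)) * ℓ (ξ d0 u0 s)) ≤ V γb
        rw [← hu0]
        exact hgb0'

      set c : ℝ := -V γb with hc
      have hcpos : 0 < c := by rw [hc]; linarith
      have hW0' : W γb d0 u0 ≤ -c := by rw [hc]; linarith
      have h5 : W γa d0 u0 ≤ -c * Real.exp (γb * t) :=
        key_neg ht (hF d0 u0) hγb hγa hcpos hW0'
      have h5' : W γa d0 u0 < 0 := by
        have := Real.exp_pos (γb * t)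
        nlinarith
      by_cases hbb : BddBelow (Set.range fun u : U => W γa d0 u)
      · have hginf : (⨅ u, W γa d0 u) ≤ W γa d0 u0 := ciInf_le hbb u0
        rw [hVa] at hd0
        rw [← hd0] at hginf
        linarith
      · rw [not_bddBelow_iff] at hbb
        have hnb2 : ¬ BddBelow (Set.range fun u : U => W γb d0 u) := by
          rw [not_bddBelow_iff]
          intro B
          set K : ℝ := (|B| + 1) * Real.exp (-(γa * t)) with hK
          have hKpos : 0 < K := by positivity
          obtain ⟨y, ⟨u, rfl⟩, hy⟩ := hbb (-K)
          refine ⟨_, ⟨u, rfl⟩, ?_⟩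
          show W γb d0 u < B
          have h6 : W γb d0 u ≤ -K * Real.exp (γa * t) :=
            key_neg ht (hF d0 u) hγa hγb hKpos hy.le
          have hKval : K * Real.exp (γa * t) = |B| + 1 := by
            rw [hK, mul_assoc, ← Real.exp_add]
            simp
          have hB : -|B| ≤ B := neg_abs_le B
          nlinarith
        have hzero : (⨅ u' : U, ⨆ s : Set.Icc t (0:ℝ),
            Real.exp (γb * ((s : ℝ) - t)) * ℓ (ξ d0 u' s)) = 0 :=
          Real.iInf_of_not_bddBelow hnb2
        rw [hu0] at hzero
        have hW0'' : (⨆ s : Set.Icc t (0:ℝ),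
            Real.exp (γb * ((s : ℝ) - t)) * ℓ (ξ d0 u0 s)) ≤ V γb := hW0
        linarith
    linarith
  exact ⟨fun h => key γ₁ γ₂ h1 hγ₂ h, fun h => key γ₂ γ₁ hγ₂ h1 h⟩
end

section
/- If a system is exponentially stabilizable to a compact set I_m with rate γ and constant k (i.e., for every admissible disturbance strategy there exists a control signal with dst(ξ(s), I_m) ≤ k e^{−γ(s−t)} dst(x, I_m)), and ℓ(x) = ‖x‖ − max_{a∈∂I_m} ‖a‖, then the time-varying value V_γ(x,t) = sup_d inf_u max_{s∈[t,0]} e^{γ(s−t)} ℓ(ξ(s)) is bounded above by k · min_{a∈∂I_m} ‖x − a‖, uniformly in t. -/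
open Real

/-- If the system is exponentially stabilizable to the set with boundary `A`
with rate `γ` and constant `k`, then the time-varying value
`V_γ(x,t) = sup_d inf_u max_{s∈[t,0]} e^{γ(s−t)} (‖ξ(s)‖ − max_{a∈A}‖a‖)` is
bounded above by `k · min_{a∈A} ‖x − a‖`, uniformly in `t`. -/
theorem value_le_of_exp_stabilizable {E U D : Type*} [NormedAddCommGroup E]
    [Nonempty U] [Nonempty D]
    (A : Set E) (hA : IsCompact A) (hAne : A.Nonempty)
    (t : ℝ) (ht : t ≤ 0) (γ k : ℝ) (hγ : 0 < γ) (hk : 0 < k)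
    (x : E) (ξ : D → U → ℝ → E)
    -- exponential stabilizability: for every disturbance strategy there is a
    -- control with dst(ξ(s), I_m) ≤ k e^{−γ(s−t)} dst(x, I_m) on [t,0]
    (hstab : ∀ d : D, ∃ u : U, ∀ s ∈ Set.Icc t (0:ℝ),
      sInf ((fun a => ‖ξ d u s - a‖) '' A) ≤
        k * Real.exp (-γ * (s - t)) * sInf ((fun a => ‖x - a‖) '' A)) :
    (⨆ d, ⨅ u, ⨆ s : Set.Icc t (0:ℝ),
        Real.exp (γ * ((s : ℝ) - t)) * (‖ξ d u s‖ - sSup ((fun a => ‖a‖) '' A)))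
      ≤ k * sInf ((fun a => ‖x - a‖) '' A) := by
  have hne : Nonempty (Set.Icc t (0:ℝ)) := ⟨⟨0, ht, le_refl 0⟩⟩
  set B := k * sInf ((fun a => ‖x - a‖) '' A) with hB
  have hB0 : 0 ≤ B := by
    apply mul_nonneg hk.le
    apply Real.sInf_nonneg
    rintro y ⟨a, _, rfl⟩; exact norm_nonneg _
  apply ciSup_le
  intro d
  obtain ⟨u, hu⟩ := hstab d
  by_cases hbdd : BddBelow (Set.range fun u : U => ⨆ s : Set.Icc t (0:ℝ),
      Real.exp (γ * ((s : ℝ) - t)) * (‖ξ d u s‖ - sSup ((fun a => ‖a‖) '' A)))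
  · refine ciInf_le_of_le hbdd u ?_
    apply ciSup_le
    rintro ⟨s, hs⟩
    have key : ‖ξ d u s‖ - sSup ((fun a => ‖a‖) '' A) ≤
        sInf ((fun a => ‖ξ d u s - a‖) '' A) := by
      apply le_csInf (hAne.image _)
      rintro y ⟨a, ha, rfl⟩
      have h1 : ‖a‖ ≤ sSup ((fun a => ‖a‖) '' A) :=
        le_csSup ((hA.image continuous_norm).bddAbove) ⟨a, ha, rfl⟩
      have h2 : ‖ξ d u s‖ - ‖a‖ ≤ ‖ξ d u s - a‖ := norm_sub_norm_le _ _
      linarith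
    have hexp : (0:ℝ) < Real.exp (γ * (s - t)) := Real.exp_pos _
    calc Real.exp (γ * (s - t)) * (‖ξ d u s‖ - sSup ((fun a => ‖a‖) '' A))
        ≤ Real.exp (γ * (s - t)) * sInf ((fun a => ‖ξ d u s - a‖) '' A) := by
          exact mul_le_mul_of_nonneg_left key hexp.le
      _ ≤ Real.exp (γ * (s - t)) *
            (k * Real.exp (-γ * (s - t)) * sInf ((fun a => ‖x - a‖) '' A)) := by
          exact mul_le_mul_of_nonneg_left (hu s ⟨hs.1, hs.2⟩) hexp.le
      _ = B := by
          rw [hB]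
          have : Real.exp (γ * (s - t)) * Real.exp (-γ * (s - t)) = 1 := by
            rw [← Real.exp_add]; ring_nf; exact Real.exp_zero
          nlinarith [this]
  · rw [Real.iInf_of_not_bddBelow hbdd]
    exact hB0
end
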